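/- arXiv:1707.04624 — 3 statements merged into one kernel-verified Lean document; each statement's English description precedes it below -/
import Mathlib

section
/- Let (G,n) be a loopless finite connected graph with chain structure, and let w be an admissible multidegree on (G,n). Then the composition of the twists at all vertices of G (each performed once, in any order) returns w to itself. Consequently, the twist at a vertex v is invertible, with inverse given by the composition of the twists at all vertices other than v. -/
open Finset

/-- An admissible multidegree on a graph with vertex set `V`, edge set `E` and
chain structure `n`. -/
structure AdmDeg (V E : Type*) (n : E → ℕ) where
  wG : V → ℤ
  mu : (e : E) → ZMod (n e)

variable {V E : Type*} [Fintype V] [Fintype E] [DecidableEq V] [DecidableEq E]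

/-- The total degree of an admissible multidegree. -/
def AdmDeg.degree (n : E → ℕ) (w : AdmDeg V E n) : ℤ :=
  ((univ.filter fun e => w.mu e ≠ 0).card : ℤ) + ∑ v, w.wG v

/-- The twist of an admissible multidegree at a vertex `v` (the graph is oriented by
`tail`/`head`, and `σ(e,v) = 1` if `v` is the tail of `e`, `-1` if it is the head).
For each edge `e` incident to `v`: if `μ(e) + σ(e,v) = 0` the other endpoint gains a chip;
if `μ(e) = 0` then `v` loses a chip; and `μ(e)` is replaced by `μ(e) + σ(e,v)`. -/
def twist (tail head : E → V) (n : E → ℕ) (v : V) (w : AdmDeg V E n) : AdmDeg V E n where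
  wG := fun u => w.wG u
    + ((univ.filter fun e => tail e = v ∧ head e = u ∧ w.mu e + 1 = 0).card : ℤ)
    + ((univ.filter fun e => head e = v ∧ tail e = u ∧ w.mu e - 1 = 0).card : ℤ)
    - (if u = v then
        ((univ.filter fun e => (tail e = v ∨ head e = v) ∧ w.mu e = 0).card : ℤ) else 0)
  mu := fun e =>
    if tail e = v then w.mu e + 1 else if head e = v then w.mu e - 1 else w.mu e

/-- The adjacency relation of the (multi)graph given by `tail` and `head`. -/
def GraphAdj (tail head : E → V) (u u' : V) : Prop :=
  ∃ e, (tail e = u ∧ head e = u') ∨ (tail e = u' ∧ head e = u)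

/-! The twist at a set `S` of vertices acts on each edge independently: an edge with exactly one
endpoint in `S` is twisted at that endpoint, the others are untouched. Twisting at a vertex
`v ∉ S` and then at `S` is the twist at `S ∪ {v}`: on an edge joining `v` to `S` the twists at its
two endpoints cancel. Hence the composite of the twists at all vertices is the twist at `univ`,
which changes no edge. -/

attribute [ext] AdmDeg

section EdgeTwist

variable {α M : Type*} [DecidableEq α] [AddCommGroupWithOne M]

def cutTwistState (S : Finset α) (a b : α) (μ : M) : M :=
  if a ∈ S ∧ b ∉ S then μ + 1 else if b ∈ S ∧ a ∉ S then μ - 1 else μ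

theorem cutTwistState_insert {S : Finset α} {v : α} (hv : v ∉ S) (a b : α) (μ : M) :
    cutTwistState (insert v S) a b μ = cutTwistState S a b (cutTwistState {v} a b μ) := by
  by_cases ha : a = v <;> by_cases hb : b = v <;> by_cases haS : a ∈ S <;> by_cases hbS : b ∈ S <;>
    simp_all [cutTwistState]

theorem cutTwistState_singleton {a b : α} (hab : a ≠ b) (v : α) (μ : M) :
    cutTwistState {v} a b μ = if a = v then μ + 1 else if b = v then μ - 1 else μ := by
  by_cases ha : a = v <;> by_cases hb : b = v <;> simp_all [cutTwistState]

variable [DecidableEq M]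

/-- The change of the chip count at `u` when the edge `a → b` in state `μ` is twisted at its
tail `a`; twisting at the head `b` is twisting the reversed edge `b → a`, in state `-μ`, at its
tail. -/
def tailTwistChips (a b : α) (μ : M) (u : α) : ℤ :=
  (if u = b ∧ μ + 1 = 0 then 1 else 0) - (if u = a ∧ μ = 0 then 1 else 0)

theorem tailTwistChips_add_reverse (a b : α) {μ ν : M} (h : μ + 1 + ν = 0) (u : α) :
    tailTwistChips a b μ u + tailTwistChips b a ν u = 0 := by
  have hν : ν = -(μ + 1) := eq_neg_of_add_eq_zero_right h
  have hν1 : ν + 1 = -μ := by rw [hν]; abel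
  rw [tailTwistChips, tailTwistChips, hν1, hν]
  simp only [neg_eq_zero]
  ring

def cutTwistChips (S : Finset α) (a b : α) (μ : M) (u : α) : ℤ :=
  if a ∈ S ∧ b ∉ S then tailTwistChips a b μ u
  else if b ∈ S ∧ a ∉ S then tailTwistChips b a (-μ) u else 0

theorem cutTwistChips_insert {S : Finset α} {v : α} (hv : v ∉ S) (a b : α) (μ : M) (u : α) :
    cutTwistChips (insert v S) a b μ u
      = cutTwistChips {v} a b μ u + cutTwistChips S a b (cutTwistState {v} a b μ) u := by
  by_cases ha : a = v <;> by_cases hb : b = v <;> by_cases haS : a ∈ S <;> by_cases hbS : b ∈ S <;>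
    simp_all [cutTwistChips, cutTwistState]
  -- what is left are the edges joining `v` to `S`
  · exact (tailTwistChips_add_reverse _ _ (by abel) _).symm
  · exact (tailTwistChips_add_reverse _ _ (by abel) _).symm

theorem cutTwistChips_singleton {a b : α} (hab : a ≠ b) (v : α) (μ : M) (u : α) :
    cutTwistChips {v} a b μ u
      = (if a = v ∧ b = u ∧ μ + 1 = 0 then 1 else 0) + (if b = v ∧ a = u ∧ μ - 1 = 0 then 1 else 0)
        - (if u = v ∧ (a = v ∨ b = v) ∧ μ = 0 then 1 else 0) := by
  by_cases ha : a = v <;> by_cases hb : b = v <;>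
    simp_all [cutTwistChips, tailTwistChips, eq_comm (a := u), neg_add_eq_zero, sub_eq_zero]

end EdgeTwist

def twistSet (tail head : E → V) (n : E → ℕ) (S : Finset V) (w : AdmDeg V E n) :
    AdmDeg V E n where
  wG u := w.wG u + ∑ e, cutTwistChips S (tail e) (head e) (w.mu e) u
  mu e := cutTwistState S (tail e) (head e) (w.mu e)

section TwistSet

omit [Fintype V] [DecidableEq E]

variable (tail head : E → V) (n : E → ℕ)

theorem twistSet_empty (w : AdmDeg V E n) : twistSet tail head n ∅ w = w := by
  ext <;> simp [twistSet, cutTwistChips, cutTwistState]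

theorem twistSet_univ [Fintype V] (w : AdmDeg V E n) : twistSet tail head n univ w = w := by
  ext <;> simp [twistSet, cutTwistChips, cutTwistState]

theorem twistSet_insert {v : V} {S : Finset V} (hv : v ∉ S) (w : AdmDeg V E n) :
    twistSet tail head n (insert v S) w
      = twistSet tail head n S (twistSet tail head n {v} w) := by
  ext u
  · simp only [twistSet, cutTwistChips_insert hv, sum_add_distrib, add_assoc]
  · simp only [twistSet, cutTwistState_insert hv]

theorem twist_eq_twistSet_singleton (hloopless : ∀ e, tail e ≠ head e) (v : V)
    (w : AdmDeg V E n) : twist tail head n v w = twistSet tail head n {v} w := by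
  ext u
  · simp only [twist, twistSet, cutTwistChips_singleton (hloopless _), sum_add_distrib,
      sum_sub_distrib, natCast_card_filter]
    split_ifs with huv <;> simp [huv, add_assoc, add_sub_assoc]
  · simp only [twist, twistSet, cutTwistState_singleton (hloopless _)]

theorem foldl_twist_eq_twistSet (hloopless : ∀ e, tail e ≠ head e) (l : List V) (hl : l.Nodup)
    (w : AdmDeg V E n) :
    l.foldl (fun a u => twist tail head n u a) w = twistSet tail head n l.toFinset w := by
  induction l generalizing w with
  | nil => exact (twistSet_empty tail head n w).symm
  | cons v l ih =>
    obtain ⟨hv, hl⟩ := List.nodup_cons.1 hl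
    rw [List.foldl_cons, ih hl, List.toFinset_cons,
      twistSet_insert tail head n (List.mem_toFinset.not.2 hv),
      twist_eq_twistSet_singleton tail head n hloopless]

end TwistSet

theorem foldl_twist_univ_general (tail head : E → V) (hloopless : ∀ e, tail e ≠ head e)
    (n : E → ℕ) (w : AdmDeg V E n) :
    (∀ l : List V, l.Nodup → (∀ v, v ∈ l) →
      l.foldl (fun a u => twist tail head n u a) w = w) ∧
    (∀ (v : V) (l : List V), l.Nodup → (∀ u, u ∈ l ↔ u ≠ v) →
      l.foldl (fun a u => twist tail head n u a) (twist tail head n v w) = w) := by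
  have foldl_univ (l : List V) (hl : l.Nodup) (hmem : ∀ v, v ∈ l) (w : AdmDeg V E n) :
      l.foldl (fun a u => twist tail head n u a) w = w := by
    rw [foldl_twist_eq_twistSet tail head n hloopless l hl,
      eq_univ_of_forall fun v => List.mem_toFinset.2 (hmem v), twistSet_univ]
  refine ⟨fun l hl hmem => foldl_univ l hl hmem w, fun v l hl hmem => foldl_univ (v :: l) ?_ ?_ w⟩
  · exact List.nodup_cons.2 ⟨fun hv => (hmem v).1 hv rfl, hl⟩
  · exact fun u => List.mem_cons.2 ((em (u = v)).imp id (hmem u).2)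

/-- on a loopless finite connected graph with chain structure, the
composition of the twists at all vertices (each performed once, in any order) is the
identity on admissible multidegrees.  Consequently the twist at a vertex `v` is
invertible, its inverse being the composition of the twists at all other vertices. -/
theorem foldl_twist_univ (tail head : E → V) (hloopless : ∀ e, tail e ≠ head e)
    (hconn : ∀ u u' : V, Relation.ReflTransGen (GraphAdj tail head) u u')
    (n : E → ℕ) (hn : ∀ e, 0 < n e) (w : AdmDeg V E n) :
    (∀ l : List V, l.Nodup → (∀ v, v ∈ l) →
      l.foldl (fun a u => twist tail head n u a) w = w) ∧
    (∀ (v : V) (l : List V), l.Nodup → (∀ u, u ∈ l ↔ u ≠ v) →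
      l.foldl (fun a u => twist tail head n u a) (twist tail head n v w) = w) :=
  foldl_twist_univ_general tail head hloopless n w
end

section
/- Let G be a multitree with chain structure n, let (w_v)_{v ∈ V(G)} be a tight tuple of admissible multidegrees in the twist-orbit of an admissible multidegree w_0, and let e be an edge of Ḡ with endpoints v, v'. Let D_i^{e,v} (i ≥ 0) be the twisting divisors associated to (w_v)_v on the component Z_v, and b = b_{v,v'} the number of twists at (e,v') taking w_{v'} to w_v. Then for each 0 ≤ i ≤ b, if D_{i+1}^{e,v} - D_i^{e,v} = Σ_{e' ∈ I} P_{e'}^v for a set I of edges of G over e, then D_{b-i+1}^{e,v'} - D_{b-i}^{e,v'} = Σ_{e' ∈ I} P_{e'}^{v'}. In particular deg(D_{i+1}^{e,v} - D_i^{e,v}) = deg(D_{b-i+1}^{e,v'} - D_{b-i}^{e,v'}), and an index j is critical for D_•^{e,v} if and only if b - j is critical for D_•^{e,v'}. -/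
open Finset

variable {V E : Type*} [Fintype V] [Fintype E] [DecidableEq V] [DecidableEq E]

/-- The negative twist at `v`: the inverse of the twist at `v`. -/
def negTwist (tail head : E → V) (n : E → ℕ) (v : V) (w : AdmDeg V E n) : AdmDeg V E n where
  wG := fun u => w.wG u
    - ((univ.filter fun e =>
        ((tail e = v ∧ head e = u) ∨ (head e = v ∧ tail e = u)) ∧ w.mu e = 0).card : ℤ)
    + (if u = v then
        ((univ.filter fun e =>
          (tail e = v ∧ w.mu e = 1) ∨ (head e = v ∧ w.mu e = -1)).card : ℤ) else 0)
  mu := fun e =>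
    if tail e = v then w.mu e - 1 else if head e = v then w.mu e + 1 else w.mu e

/-- `w` is concentrated on `v`: there is an ordering of the vertices starting at `v`
such that each subsequent vertex has negative coefficient after performing the negative
twists at all previous vertices. -/
def Concentrated (tail head : E → V) (n : E → ℕ) (w : AdmDeg V E n) (v : V) : Prop :=
  ∃ l : List V, l.Nodup ∧ (∀ u, u ∈ l) ∧ l.head? = some v ∧
    ∀ (i : ℕ) (hi : i < l.length), 0 < i →
      ((l.take i).foldl (fun a u => negTwist tail head n u a) w).wG (l.get ⟨i, hi⟩) < 0

/-- The simple graph `Ḡ` obtained from `G` by collapsing parallel edges. -/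
def collapse (tail head : E → V) : SimpleGraph V :=
  SimpleGraph.fromRel fun u u' => ∃ e, tail e = u ∧ head e = u'

/-- The partial twist of `w` at `(e, a)` for a multitree, where `e` is the edge of `Ḡ`
joining `a` to `b`: the twist operations of the twist at `a` are performed only on the
edges of `G` lying over `e`, i.e. on the edges joining `a` and `b`. -/
def ptwist (tail head : E → V) (n : E → ℕ) (a b : V) (w : AdmDeg V E n) :
    AdmDeg V E n where
  wG := fun u => w.wG u
    + (if u = b then
        ((univ.filter fun e =>
          (tail e = a ∧ head e = b ∧ w.mu e + 1 = 0) ∨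
          (tail e = b ∧ head e = a ∧ w.mu e - 1 = 0)).card : ℤ) else 0)
    - (if u = a then
        ((univ.filter fun e =>
          ((tail e = a ∧ head e = b) ∨ (tail e = b ∧ head e = a)) ∧ w.mu e = 0).card : ℤ)
       else 0)
  mu := fun e =>
    if tail e = a ∧ head e = b then w.mu e + 1
    else if tail e = b ∧ head e = a then w.mu e - 1
    else w.mu e

/-- `σ(e,v)·μ(e)` as an element of `ℤ/n(e)ℤ`. -/
def sigmaMu (tail : E → V) (n : E → ℕ) (w : AdmDeg V E n) (v : V) (e : E) :
    ZMod (n e) :=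
  if tail e = v then w.mu e else -(w.mu e)

/-- The sequence of twisting divisors `D_i^{e,v}` associated to `w = w_v`, recorded as
multiplicity functions on the edges of `G` lying over the edge `e` of `Ḡ` joining
`v` and `v'`  (the value at `e'` is the coefficient of the marked point `P_{e'}^v`):
`D_0 = 0` and `D_{i+1} - D_i = Σ P_{e'}^v` over edges `e'` over `e` with
`σ(e',v)·μ_v(e') ≡ -i (mod n(e'))`. -/
def Dseq (tail head : E → V) (n : E → ℕ) (w : AdmDeg V E n) (v v' : V) :
    ℕ → E → ℕ
  | 0 => fun _ => 0
  | (i + 1) => fun e =>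
      Dseq tail head n w v v' i e +
        (if ((tail e = v ∧ head e = v') ∨ (tail e = v' ∧ head e = v)) ∧
            sigmaMu tail n w v e + (i : ZMod (n e)) = 0 then 1 else 0)

/-!
Twisting `b` times at `(e, v')` moves `μ(e')` by `∓b` on every edge `e'` of `G` over `e`,
so `σ(e',v)·μ_v(e') = -σ(e',v')·μ_{v'}(e') - b` (the signs `σ(e',v)` and `σ(e',v')` are
opposite because `G` has no loops). Hence `σ(e',v)·μ_v(e') ≡ -i` exactly when
`σ(e',v')·μ_{v'}(e') ≡ -(b - i)`, i.e. the `i`-th increment of `D_•^{e,v}` and the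
`(b - i)`-th increment of `D_•^{e,v'}` are supported on the same edges.
-/

section

omit [Fintype V] [DecidableEq E]

lemma ptwist_mu (tail head : E → V) (n : E → ℕ) (a c : V) (w : AdmDeg V E n) (e : E) :
    (ptwist tail head n a c w).mu e =
      if tail e = a ∧ head e = c then w.mu e + 1
      else if tail e = c ∧ head e = a then w.mu e - 1 else w.mu e := rfl

lemma ptwist_iterate_mu (tail head : E → V) (n : E → ℕ) (a c : V) (w : AdmDeg V E n)
    (k : ℕ) (e : E) :
    ((fun x => ptwist tail head n a c x)^[k] w).mu e =
      if tail e = a ∧ head e = c then w.mu e + k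
      else if tail e = c ∧ head e = a then w.mu e - k else w.mu e := by
  induction k with
  | zero => simp
  | succ k ih =>
    rw [Function.iterate_succ_apply', ptwist_mu, ih]
    split_ifs <;> push_cast <;> ring

lemma sigmaMu_ptwist_iterate (tail head : E → V) (n : E → ℕ) (v v' : V)
    (w : AdmDeg V E n) (b : ℕ) {e : E} (hloop : tail e ≠ head e)
    (he : (tail e = v ∧ head e = v') ∨ (tail e = v' ∧ head e = v)) :
    sigmaMu tail n ((fun x => ptwist tail head n v' v x)^[b] w) v e =
      -sigmaMu tail n w v' e - b := by
  rcases he with ⟨rfl, rfl⟩ | ⟨rfl, rfl⟩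
  · simp [sigmaMu, ptwist_iterate_mu, hloop]
  · simp [sigmaMu, ptwist_iterate_mu, hloop]
    ring

section Dseq

omit [Fintype E]

variable (tail head : E → V) (n : E → ℕ) (w : AdmDeg V E n) (v v' : V)

lemma Dseq_succ_sub (i : ℕ) (e : E) :
    Dseq tail head n w v v' (i + 1) e - Dseq tail head n w v v' i e =
      if ((tail e = v ∧ head e = v') ∨ (tail e = v' ∧ head e = v)) ∧
          sigmaMu tail n w v e + (i : ZMod (n e)) = 0 then 1 else 0 := by
  simp only [Dseq, Nat.add_sub_cancel_left]

lemma Dseq_succ_ne_iff (i : ℕ) (e : E) :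
    Dseq tail head n w v v' (i + 1) e ≠ Dseq tail head n w v v' i e ↔
      Dseq tail head n w v v' (i + 1) e - Dseq tail head n w v v' i e ≠ 0 := by
  simp only [Dseq]
  omega

end Dseq

lemma Dseq_ptwist_iterate_succ_sub (tail head : E → V) (hloopless : ∀ e, tail e ≠ head e)
    (n : E → ℕ) (v v' : V) (w : AdmDeg V E n) {b i : ℕ} (hi : i ≤ b) (e : E) :
    Dseq tail head n ((fun x => ptwist tail head n v' v x)^[b] w) v v' (i + 1) e -
        Dseq tail head n ((fun x => ptwist tail head n v' v x)^[b] w) v v' i e =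
      Dseq tail head n w v' v (b - i + 1) e - Dseq tail head n w v' v (b - i) e := by
  rw [Dseq_succ_sub, Dseq_succ_sub]
  refine if_congr ((and_congr_left' or_comm).trans (and_congr_right fun he => ?_)) rfl rfl
  rw [sigmaMu_ptwist_iterate tail head n v v' w b (hloopless e) he.symm, Nat.cast_sub hi,
    ← neg_eq_zero]
  ring_nf

end

theorem twisting_divisor_symmetry_general (tail head : E → V)
    (hloopless : ∀ e, tail e ≠ head e) (n : E → ℕ)
    (w : V → AdmDeg V E n)
    (v v' : V)
    (b : ℕ) (hb : w v = (fun x => ptwist tail head n v' v x)^[b] (w v')) :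
    ∀ i : ℕ, i ≤ b →
      (∀ e : E,
        Dseq tail head n (w v) v v' (i + 1) e - Dseq tail head n (w v) v v' i e =
          Dseq tail head n (w v') v' v (b - i + 1) e -
            Dseq tail head n (w v') v' v (b - i) e) ∧
      (∑ e : E, (Dseq tail head n (w v) v v' (i + 1) e -
          Dseq tail head n (w v) v v' i e) =
        ∑ e : E, (Dseq tail head n (w v') v' v (b - i + 1) e -
          Dseq tail head n (w v') v' v (b - i) e)) ∧
      ((∃ e, Dseq tail head n (w v) v v' (i + 1) e ≠ Dseq tail head n (w v) v v' i e) ↔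
        (∃ e, Dseq tail head n (w v') v' v (b - i + 1) e ≠
          Dseq tail head n (w v') v' v (b - i) e)) := by
  intro i hi
  have hincr := fun e => hb ▸ Dseq_ptwist_iterate_succ_sub tail head hloopless n v v' (w v') hi e
  refine ⟨hincr, sum_congr rfl fun e _ => hincr e, exists_congr fun e => ?_⟩
  rw [Dseq_succ_ne_iff, Dseq_succ_ne_iff, hincr]

/-- for a tight tuple `(w_v)` on a multitree, with `w_v` obtained from
`w_{v'}` by `b` twists at `(e, v')`, the increments of the twisting divisor sequences
at the two ends of `e` correspond: `D_{i+1}^{e,v} - D_i^{e,v}` is supported on the same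
set of edges over `e` as `D_{b-i+1}^{e,v'} - D_{b-i}^{e,v'}`; in particular the degrees
of the increments agree, and `j` is critical for `D_•^{e,v}` iff `b - j` is critical for
`D_•^{e,v'}`. -/
theorem twisting_divisor_symmetry (tail head : E → V)
    (hloopless : ∀ e, tail e ≠ head e) (n : E → ℕ) (hn : ∀ e, 0 < n e)
    (htree : (collapse tail head).IsTree)
    (w : V → AdmDeg V E n)
    (hconc : ∀ u, Concentrated tail head n (w u) u)
    (htight : ∀ a b : V,
      (∃ e, (tail e = a ∧ head e = b) ∨ (tail e = b ∧ head e = a)) →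
      ∃ k : ℕ, w a = (fun x => ptwist tail head n b a x)^[k] (w b))
    (v v' : V) (hadj : ∃ e, (tail e = v ∧ head e = v') ∨ (tail e = v' ∧ head e = v))
    (b : ℕ) (hb : w v = (fun x => ptwist tail head n v' v x)^[b] (w v')) :
    ∀ i : ℕ, i ≤ b →
      (∀ e : E,
        Dseq tail head n (w v) v v' (i + 1) e - Dseq tail head n (w v) v v' i e =
          Dseq tail head n (w v') v' v (b - i + 1) e -
            Dseq tail head n (w v') v' v (b - i) e) ∧
      (∑ e : E, (Dseq tail head n (w v) v v' (i + 1) e -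
          Dseq tail head n (w v) v v' i e) =
        ∑ e : E, (Dseq tail head n (w v') v' v (b - i + 1) e -
          Dseq tail head n (w v') v' v (b - i) e)) ∧
      ((∃ e, Dseq tail head n (w v) v v' (i + 1) e ≠ Dseq tail head n (w v) v v' i e) ↔
        (∃ e, Dseq tail head n (w v') v' v (b - i + 1) e ≠
          Dseq tail head n (w v') v' v (b - i) e)) :=
  twisting_divisor_symmetry_general tail head hloopless n w v v' b hb
end

section
/- Let Γ be a metric graph whose underlying model has vertex set V(G) with Ḡ (the collapse of parallel edges) a tree. Let h be a piecewise linear function on Γ with integer slopes such that the divisor D' := D + div(-h) + r·v_0 is effective away from v_0 and v_0-reduced for some divisor D ≥ 0 and integer r ≥ 0. If there were an edge ẽ_0 of G incident to a vertex v_0 with outgoing slope slp_{ẽ_0, v_0}(h) > 0, then by Dhar's burning algorithm there is an infinite sequence of distinct vertices v_0, v_1, v_2, ... of Ḡ and edges e_1, e_2, ... of Ḡ with e_i incident to v_{i-1} and v_i, contradicting that Ḡ is a finite tree. Hence slp_{e, v_0}(h) ≤ 0 for all edges e incident to v_0. -/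
/-! Firing along `h` turns `D' = D + div(-h) + r·v₀` back into `D + r·v₀`, which is effective.
Since `D'` is `v₀`-reduced, `h` must therefore attain its maximum at `v₀`, and a function that
is maximal at `v₀` has no positive outgoing slope there. -/

open Finset

variable {V E : Type*} [Fintype V] [Fintype E] [DecidableEq V] [DecidableEq E]

/-- The points of the metric graph `Γ` with vertex set `V`, edge set `E` and
edge lengths `len`: vertices, together with interior points `(e, t)` with
`0 < t < len e` (position measured from the tail of `e`). -/
def MPoint (V E : Type*) (len : E → ℝ) : Type _ :=
  V ⊕ {p : E × ℝ // 0 < p.2 ∧ p.2 < len p.1}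

/-- The function on `[0, len e]` obtained by restricting `f : Γ → ℝ` to the edge `e`. -/
noncomputable def edgeFun (tail head : E → V) (len : E → ℝ) (f : MPoint V E len → ℝ) (e : E) :
    ℝ → ℝ := fun t =>
  if h : 0 < t ∧ t < len e then f (Sum.inr ⟨(e, t), h⟩)
  else if t ≤ 0 then f (Sum.inl (tail e)) else f (Sum.inl (head e))

/-- `g` is piecewise linear with integer slopes on `[a, b]`. -/
def IsPLOn (g : ℝ → ℝ) (a b : ℝ) : Prop :=
  ∃ (k : ℕ) (t : Fin (k + 1) → ℝ) (s : Fin k → ℤ),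
    Monotone t ∧ t 0 = a ∧ t (Fin.last k) = b ∧
    ∀ i : Fin k, ∀ x ∈ Set.Icc (t i.castSucc) (t i.succ),
      g x = g (t i.castSucc) + (s i : ℝ) * (x - t i.castSucc)

/-- `f : Γ → ℝ` is a rational function on `Γ`: piecewise linear with integer slopes
along every edge. -/
def IsPL (tail head : E → V) (len : E → ℝ) (f : MPoint V E len → ℝ) : Prop :=
  ∀ e, IsPLOn (edgeFun tail head len f e) 0 (len e)

/-- `ord_p(f)`: the sum of the outgoing slopes of `f` at the point `p` of `Γ`. -/
noncomputable def ordAt (tail head : E → V) (len : E → ℝ) (f : MPoint V E len → ℝ) :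
    MPoint V E len → ℝ
  | Sum.inr q =>
      derivWithin (edgeFun tail head len f q.1.1) (Set.Ici q.1.2) q.1.2
        - derivWithin (edgeFun tail head len f q.1.1) (Set.Iic q.1.2) q.1.2
  | Sum.inl v => ∑ e : E,
      ((if tail e = v then derivWithin (edgeFun tail head len f e) (Set.Ici (0 : ℝ)) 0 else 0)
        - (if head e = v then derivWithin (edgeFun tail head len f e) (Set.Iic (len e)) (len e)
            else 0))

/-- Linear equivalence of divisors on `Γ`: `D' = D + div(f)` for a rational function `f`. -/
def LinEquiv (tail head : E → V) (len : E → ℝ) (D D' : MPoint V E len →₀ ℤ) : Prop :=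
  ∃ f, IsPL tail head len f ∧
    ∀ p, (D' p : ℝ) = (D p : ℝ) + ordAt tail head len f p

/-- The degree of a divisor on `Γ`. -/
def degD {len : E → ℝ} (D : MPoint V E len →₀ ℤ) : ℤ := D.sum fun _ c => c

/-- A divisor is effective if all its coefficients are nonnegative. -/
def Effective {len : E → ℝ} (D : MPoint V E len →₀ ℤ) : Prop := ∀ p, 0 ≤ D p

/-- The rank of `D` is at least `r`. -/
def RankGe (tail head : E → V) (len : E → ℝ) (D : MPoint V E len →₀ ℤ) (r : ℕ) : Prop :=
  ∀ En : MPoint V E len →₀ ℤ, Effective En → degD En = (r : ℤ) →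
    ∃ D', Effective D' ∧ LinEquiv tail head len (D - En) D'

/-- The (Baker–Norine) rank of a divisor on `Γ`. -/
noncomputable def rank (tail head : E → V) (len : E → ℝ) (D : MPoint V E len →₀ ℤ) : ℤ :=
  sSup {z : ℤ | z = -1 ∨ ∃ r : ℕ, z = (r : ℤ) ∧ RankGe tail head len D r}

/-- The valence of a vertex of `Γ`. -/
def valence (tail head : E → V) (v : V) : ℕ :=
  (univ.filter fun e => tail e = v).card + (univ.filter fun e => head e = v).card

/-- The canonical divisor `K_Γ = Σ_x (val(x) - 2)·x` of `Γ`. -/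
noncomputable def canonical (tail head : E → V) (len : E → ℝ) : MPoint V E len →₀ ℤ :=
  ∑ v : V, Finsupp.single (Sum.inl v) ((valence tail head v : ℤ) - 2)

/-- Connectedness of `Γ`. -/
def MGConnected (tail head : E → V) : Prop :=
  ∀ u u' : V, Relation.ReflTransGen
    (fun a b => ∃ e, (tail e = a ∧ head e = b) ∨ (tail e = b ∧ head e = a)) u u'

/-- The genus (first Betti number) of the connected metric graph `Γ`. -/
def genus (V E : Type*) [Fintype V] [Fintype E] : ℤ :=
  (Fintype.card E : ℤ) - (Fintype.card V : ℤ) + 1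

open scoped Classical

/-- A (real-valued) divisor `D` on `Γ` is `q`-reduced: `D` is effective away from
`q`, and for every rational function `f` whose maximum is not attained at `q`
(firing the maximum set of `f` corresponds to a step of Dhar's burning algorithm),
`D + div(f)` fails to be effective away from `q`. -/
def IsReducedAtR (tail head : E → V) (len : E → ℝ) (D : MPoint V E len → ℝ)
    (q : MPoint V E len) : Prop :=
  (∀ p, p ≠ q → 0 ≤ D p) ∧
  ∀ f, IsPL tail head len f → (∃ p, f q < f p) →
    ∃ p, p ≠ q ∧ D p + ordAt tail head len f p < 0

lemma derivWithin_Ici_nonpos_of_isLocalMaxOn {g : ℝ → ℝ} {a : ℝ}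
    (hg : IsLocalMaxOn g (Set.Ici a) a) : derivWithin g (Set.Ici a) a ≤ 0 :=
  hg.fderivWithin_nonpos <| mem_posTangentConeAt_of_segment_subset <| by
    rw [segment_eq_Icc (by linarith)]; exact Set.Icc_subset_Ici_self

lemma derivWithin_Iic_nonneg_of_isLocalMaxOn {g : ℝ → ℝ} {b : ℝ}
    (hg : IsLocalMaxOn g (Set.Iic b) b) : 0 ≤ derivWithin g (Set.Iic b) b := by
  have hy : (-1 : ℝ) ∈ posTangentConeAt (Set.Iic b) b :=
    mem_posTangentConeAt_of_segment_subset <| by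
      rw [segment_symm, segment_eq_Icc (by linarith)]; exact Set.Icc_subset_Iic_self
  simpa [derivWithin] using hg.fderivWithin_nonpos hy

lemma ordAt_neg {V E : Type*} [Fintype E] [DecidableEq V] (tail head : E → V) (len : E → ℝ)
    (f : MPoint V E len → ℝ) (p : MPoint V E len) :
    ordAt tail head len (fun x => -(f x)) p = -ordAt tail head len f p := by
  have hneg : ∀ e, edgeFun tail head len (fun x => -(f x)) e =
      fun t => -edgeFun tail head len f e t := by
    intro e; funext t; unfold edgeFun; split_ifs <;> rfl
  cases p with
  | inl v =>
    simp only [ordAt, hneg, derivWithin.fun_neg, ← Finset.sum_neg_distrib]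
    refine Finset.sum_congr rfl fun e _ => ?_
    split_ifs <;> ring
  | inr q =>
    simp only [ordAt, hneg, derivWithin.fun_neg]
    ring

lemma edgeFun_zero {V E : Type*} (tail head : E → V) (len : E → ℝ)
    (f : MPoint V E len → ℝ) (e : E) :
    edgeFun tail head len f e 0 = f (Sum.inl (tail e)) := by
  simp [edgeFun]

lemma edgeFun_len {V E : Type*} (tail head : E → V) (len : E → ℝ)
    (f : MPoint V E len → ℝ) {e : E} (he : 0 < len e) :
    edgeFun tail head len f e (len e) = f (Sum.inl (head e)) := by
  simp [edgeFun, he]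

lemma edgeFun_le_of_isMaxOn {V E : Type*} (tail head : E → V) (len : E → ℝ)
    {f : MPoint V E len → ℝ} {q : MPoint V E len}
    (hf : IsMaxOn f Set.univ q) (e : E) (t : ℝ) : edgeFun tail head len f e t ≤ f q := by
  unfold edgeFun
  split_ifs <;> exact hf (Set.mem_univ _)

lemma IsReducedAtR.isMaxOn {V E : Type*} [Fintype E] [DecidableEq V]
    (tail head : E → V) (len : E → ℝ) {D : MPoint V E len → ℝ} {q : MPoint V E len}
    (hD : IsReducedAtR tail head len D q) {f : MPoint V E len → ℝ}
    (hf : IsPL tail head len f) (heff : ∀ p, p ≠ q → 0 ≤ D p + ordAt tail head len f p) :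
    IsMaxOn f Set.univ q := by
  refine fun p _ => show f p ≤ f q from le_of_not_gt fun hlt => ?_
  obtain ⟨p', hp'q, hneg⟩ := hD.2 f hf ⟨p, hlt⟩
  exact (heff p' hp'q).not_gt hneg

theorem no_positive_outgoing_slope_general (tail head : E → V) (len : E → ℝ)
    (hlen : ∀ e, 0 < len e)
    (h : MPoint V E len → ℝ) (hPL : IsPL tail head len h)
    (D : MPoint V E len → ℤ) (hD : ∀ p, 0 ≤ D p) (r : ℕ) (v0 : V)
    (hred : IsReducedAtR tail head len
      (fun p => (D p : ℝ) + ordAt tail head len (fun x => -(h x)) p +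
        (if p = Sum.inl v0 then (r : ℝ) else 0))
      (Sum.inl v0)) :
    ∀ e : E,
      (tail e = v0 → derivWithin (edgeFun tail head len h e) (Set.Ici (0 : ℝ)) 0 ≤ 0) ∧
      (head e = v0 → 0 ≤ derivWithin (edgeFun tail head len h e) (Set.Iic (len e)) (len e)) := by
  have hmax : IsMaxOn h Set.univ (Sum.inl v0) := hred.isMaxOn tail head len hPL fun p hp => by
    simpa [ordAt_neg, hp] using hD p
  intro e
  constructor
  · rintro rfl
    refine derivWithin_Ici_nonpos_of_isLocalMaxOn (IsMaxOn.localize ?_)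
    intro t _
    simpa [edgeFun_zero] using edgeFun_le_of_isMaxOn tail head len hmax e t
  · rintro rfl
    refine derivWithin_Iic_nonneg_of_isLocalMaxOn (IsMaxOn.localize ?_)
    intro t _
    simpa [edgeFun_len tail head len h (hlen e)] using edgeFun_le_of_isMaxOn tail head len hmax e t

/-- let `Γ` be a metric graph whose collapsed model `Ḡ` is a tree, `h`
a piecewise linear function on `Γ` with integer slopes, `D ≥ 0` a divisor and `r ≥ 0`
such that `D' = D + div(-h) + r·v₀` is `v₀`-reduced.  Then `h` has no strictly
positive outgoing slope at `v₀`: for every edge `e` incident to `v₀`, the outgoing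
slope of `h` at `v₀` along `e` is `≤ 0`. -/
theorem no_positive_outgoing_slope (tail head : E → V) (len : E → ℝ)
    (hlen : ∀ e, 0 < len e) (htree : (collapse tail head).IsTree)
    (h : MPoint V E len → ℝ) (hPL : IsPL tail head len h)
    (D : MPoint V E len → ℤ) (hD : ∀ p, 0 ≤ D p) (r : ℕ) (v0 : V)
    (hred : IsReducedAtR tail head len
      (fun p => (D p : ℝ) + ordAt tail head len (fun x => -(h x)) p +
        (if p = Sum.inl v0 then (r : ℝ) else 0))
      (Sum.inl v0)) :
    ∀ e : E,
      (tail e = v0 → derivWithin (edgeFun tail head len h e) (Set.Ici (0 : ℝ)) 0 ≤ 0) ∧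
      (head e = v0 → 0 ≤ derivWithin (edgeFun tail head len h e) (Set.Iic (len e)) (len e)) :=
  no_positive_outgoing_slope_general tail head len hlen h hPL D hD r v0 hred
end
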